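/- Two-point hypercontractivity: for 1 ≤ p ≤ q ≤ ∞, 0 ≤ ρ ≤ √((p-1)/(q-1)), and any δ ∈ [0,1]: ((1/2)(1+ρδ)^q + (1/2)(1-ρδ)^q)^{1/q} ≤ ((1/2)(1+δ)^p + (1/2)(1-δ)^p)^{1/p}. -/

import Mathlib

/-!
For `q ≤ 2` expand both moments in binomial series. Only even powers survive, and for
`ρ² ≤ (p - 1) / (q - 1)` the series compare termwise, `p C(q, 2j) ρ^(2j) ≤ q C(p, 2j)`, because
`C(a, 2j) (2j)! = a (a - 1) ∏_{i < 2j - 2} (i + 2 - a)` is a product of nonnegative factors that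
decrease in `a ≤ 2`. Hence `p (‖T_ρ f‖_q^q - 1) ≤ q (‖f‖_p^p - 1)`, which Bernoulli's inequality
turns into `‖T_ρ f‖_q ≤ ‖f‖_p`; the series only converge for `δ < 1`, and `δ = 1` follows by
continuity. For `2 ≤ p ≤ q` the inequality is dual to the one for the conjugate exponents
`q' ≤ p' ≤ 2`, which have the same critical noise since `(q' - 1) / (p' - 1) = (p - 1) / (q - 1)`.
For `p < 2 < q` factor `T_ρ` through `L²`.
-/

open Finset Real

noncomputable def twoPointMoment (r u v : ℝ) : ℝ := 1 / 2 * u ^ r + 1 / 2 * v ^ r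

noncomputable def twoPointNorm (r u v : ℝ) : ℝ := twoPointMoment r u v ^ (1 / r)

/-- `1 ± ρ δ` is the noise operator `T_ρ` applied to the function `1 ± δ` on `{-1, 1}`. -/
def TwoPointHypercontractive (p q ρ : ℝ) : Prop :=
  ∀ δ : ℝ, 0 ≤ δ → δ ≤ 1 →
    twoPointNorm q (1 + ρ * δ) (1 - ρ * δ) ≤ twoPointNorm p (1 + δ) (1 - δ)

theorem twoPointMoment_nonneg {r u v : ℝ} (hu : 0 ≤ u) (hv : 0 ≤ v) : 0 ≤ twoPointMoment r u v := by
  unfold twoPointMoment; positivity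

theorem twoPointNorm_nonneg {r u v : ℝ} (hu : 0 ≤ u) (hv : 0 ≤ v) : 0 ≤ twoPointNorm r u v :=
  rpow_nonneg (twoPointMoment_nonneg hu hv) _

theorem Ring.choose_eq_prod_div_factorial {K : Type*} [Field K] [CharZero K] (a : K) (n : ℕ) :
    Ring.choose a n = (∏ j ∈ range n, (a - j)) / n.factorial := by
  rw [Ring.choose_eq_smul, ← Polynomial.aeval_eq_smeval, ← Polynomial.eval_map_algebraMap,
    descPochhammer_map, descPochhammer_eval_eq_prod_range, smul_eq_mul, div_eq_inv_mul]

theorem Ring.choose_add_two {K : Type*} [Field K] [CharZero K] (a : K) (n : ℕ) :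
    Ring.choose a (n + 2) = a * (a - 1) * (∏ i ∈ range n, (a - (i + 2))) / (n + 2).factorial := by
  rw [Ring.choose_eq_prod_div_factorial, prod_range_succ', prod_range_succ']
  push_cast
  ring_nf

theorem prod_range_two_mul_sub_comm {R : Type*} [CommRing R] (f : ℕ → R) (c : R) (j : ℕ) :
    ∏ i ∈ range (2 * j), (c - f i) = ∏ i ∈ range (2 * j), (f i - c) := by
  calc ∏ i ∈ range (2 * j), (c - f i) = ∏ i ∈ range (2 * j), -(f i - c) := by simp only [neg_sub]
    _ = _ := by rw [prod_neg, card_range, (even_two_mul j).neg_one_pow, one_mul]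

theorem hasSum_choose_mul_pow (a : ℝ) {x : ℝ} (hx : |x| < 1) :
    HasSum (fun n ↦ Ring.choose a n * x ^ n) ((1 + x) ^ a) := by
  have h := (one_add_rpow_hasFPowerSeriesOnBall_zero (a := a)).hasSum (y := x)
    (by simpa [Metric.eball_ofReal, edist_dist] using hx)
  simpa only [zero_add, binomialSeries_apply, List.ofFn_const, List.prod_replicate,
    smul_eq_mul] using h

theorem hasSum_choose_mul_pow_even (a : ℝ) {x : ℝ} (hx : |x| < 1) :
    HasSum (fun j : ℕ ↦ Ring.choose a (2 * j + 2) * x ^ (2 * j + 2))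
      (twoPointMoment a (1 + x) (1 - x) - 1) := by
  have hsum : HasSum (fun n ↦ Ring.choose a n * (1 / 2 * x ^ n + 1 / 2 * (-x) ^ n))
      (twoPointMoment a (1 + x) (1 - x)) := by
    have h := ((hasSum_choose_mul_pow a hx).mul_left (1 / 2)).add
      ((hasSum_choose_mul_pow a (x := -x) (by rwa [abs_neg])).mul_left (1 / 2))
    rw [← sub_eq_add_neg] at h
    exact h.congr_fun fun n ↦ by ring
  have heven : HasSum (fun j : ℕ ↦ Ring.choose a (2 * j) * x ^ (2 * j))
      (twoPointMoment a (1 + x) (1 - x)) := by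
    rw [← (mul_right_injective₀ (two_ne_zero (α := ℕ))).hasSum_iff] at hsum
    · convert hsum using 2 with j
      simp only [Function.comp_apply, (even_two_mul j).neg_pow]
      ring
    · intro n hn
      have hodd : Odd n := Nat.not_even_iff_odd.1 fun ⟨j, hj⟩ ↦ hn ⟨j, by simp only; omega⟩
      simp [hodd.neg_pow]
  simpa [mul_add] using (hasSum_nat_add_iff' 1).2 heven

theorem mul_choose_mul_pow_le {p q r : ℝ} (hp : 1 ≤ p) (hpq : p ≤ q) (hq : q ≤ 2) (hr0 : 0 ≤ r)
    (hr1 : r ≤ 1) (hr : r * (q - 1) ≤ p - 1) (j : ℕ) :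
    p * (Ring.choose q (2 * j + 2) * r ^ (j + 1)) ≤ q * Ring.choose p (2 * j + 2) := by
  rw [Ring.choose_add_two, Ring.choose_add_two,
    prod_range_two_mul_sub_comm (fun i : ℕ ↦ (i : ℝ) + 2),
    prod_range_two_mul_sub_comm (fun i : ℕ ↦ (i : ℝ) + 2)]
  set Aq := ∏ i ∈ range (2 * j), ((i : ℝ) + 2 - q)
  set Ap := ∏ i ∈ range (2 * j), ((i : ℝ) + 2 - p)
  have hAq : 0 ≤ Aq := prod_nonneg fun i _ ↦ by linarith [(i.cast_nonneg : (0 : ℝ) ≤ i)]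
  have hA : Aq ≤ Ap := prod_le_prod (fun i _ ↦ by linarith [(i.cast_nonneg : (0 : ℝ) ≤ i)])
    fun i _ ↦ by linarith
  calc p * (q * (q - 1) * Aq / (2 * j + 2).factorial * r ^ (j + 1))
      = q * p * (r * (q - 1)) * (r ^ j * Aq) / (2 * j + 2).factorial := by ring
    _ ≤ q * p * (p - 1) * (1 * Ap) / (2 * j + 2).factorial := by
      have hqp : 0 ≤ q * p := mul_nonneg (by linarith) (by linarith)
      have hpp : 0 ≤ q * p * (p - 1) := mul_nonneg hqp (by linarith)
      gcongr
      exact pow_le_one₀ hr0 hr1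
    _ = q * (p * (p - 1) * Ap / (2 * j + 2).factorial) := by ring

theorem sqrt_div_sub_one_le_one {p q : ℝ} (hp : 1 ≤ p) (hpq : p ≤ q) : √((p - 1) / (q - 1)) ≤ 1 :=
  sqrt_le_one.2 (div_le_one_of_le₀ (by linarith) (by linarith))

theorem sq_mul_sub_one_le_of_le_sqrt {p q ρ : ℝ} (hp : 1 ≤ p) (hpq : p ≤ q) (hρ0 : 0 ≤ ρ)
    (hρ : ρ ≤ √((p - 1) / (q - 1))) : ρ ^ 2 * (q - 1) ≤ p - 1 := by
  rw [le_sqrt hρ0 (div_nonneg (by linarith) (by linarith))] at hρ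
  rcases (sub_nonneg.2 (hp.trans hpq)).eq_or_lt with hq | hq
  · rw [← hq, mul_zero]; linarith
  · exact (le_div_iff₀ hq).1 hρ

theorem mul_twoPointMoment_sub_one_le {p q ρ δ : ℝ} (hp : 1 ≤ p) (hpq : p ≤ q) (hq : q ≤ 2)
    (hρ0 : 0 ≤ ρ) (hρ : ρ ≤ √((p - 1) / (q - 1))) (hδ : |δ| < 1) :
    p * (twoPointMoment q (1 + ρ * δ) (1 - ρ * δ) - 1) ≤
      q * (twoPointMoment p (1 + δ) (1 - δ) - 1) := by
  have hρ1 : ρ ≤ 1 := hρ.trans (sqrt_div_sub_one_le_one hp hpq)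
  have hx : |ρ * δ| < 1 := by
    rw [abs_mul, abs_of_nonneg hρ0]
    exact (mul_le_of_le_one_left (abs_nonneg δ) hρ1).trans_lt hδ
  refine hasSum_le (fun j ↦ ?_) ((hasSum_choose_mul_pow_even q hx).mul_left p)
    ((hasSum_choose_mul_pow_even p hδ).mul_left q)
  have hcoeff := mul_choose_mul_pow_le hp hpq hq (sq_nonneg ρ) (pow_le_one₀ hρ0 hρ1)
    (sq_mul_sub_one_le_of_le_sqrt hp hpq hρ0 hρ) j
  calc p * (Ring.choose q (2 * j + 2) * (ρ * δ) ^ (2 * j + 2))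
      = p * (Ring.choose q (2 * j + 2) * (ρ ^ 2) ^ (j + 1)) * δ ^ (2 * j + 2) := by ring
    _ ≤ q * Ring.choose p (2 * j + 2) * δ ^ (2 * j + 2) :=
      mul_le_mul_of_nonneg_right hcoeff (((even_two_mul j).add even_two).pow_nonneg δ)
    _ = q * (Ring.choose p (2 * j + 2) * δ ^ (2 * j + 2)) := by ring

theorem twoPointMoment_le_rpow {p q ρ δ : ℝ} (hp : 1 ≤ p) (hpq : p ≤ q) (hq : q ≤ 2)
    (hρ0 : 0 ≤ ρ) (hρ : ρ ≤ √((p - 1) / (q - 1))) (hδ0 : 0 ≤ δ) (hδ1 : δ < 1) :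
    twoPointMoment q (1 + ρ * δ) (1 - ρ * δ) ≤ twoPointMoment p (1 + δ) (1 - δ) ^ (q / p) := by
  have hp0 : 0 < p := by linarith
  have hq0 : 0 < q := by linarith
  have hρδ : ρ * δ ≤ 1 := mul_le_one₀ (hρ.trans (sqrt_div_sub_one_le_one hp hpq)) hδ0 hδ1.le
  have hMq : 0 ≤ twoPointMoment q (1 + ρ * δ) (1 - ρ * δ) :=
    twoPointMoment_nonneg (by nlinarith) (by linarith)
  have key := mul_twoPointMoment_sub_one_le hp hpq hq hρ0 hρ (abs_lt.2 ⟨by linarith, hδ1⟩)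
  generalize twoPointMoment q (1 + ρ * δ) (1 - ρ * δ) = Mq at hMq key ⊢
  generalize twoPointMoment p (1 + δ) (1 - δ) = Mp at key ⊢
  have hs : p / q * (Mq - 1) ≤ Mp - 1 := by
    rw [div_mul_eq_mul_div, div_le_iff₀ hq0]; linarith
  have hs' : -1 ≤ p / q * (Mq - 1) := by
    have : p / q ≤ 1 := div_le_one_of_le₀ hpq hq0.le
    nlinarith [mul_nonneg (div_nonneg hp0.le hq0.le) hMq]
  calc Mq = 1 + q / p * (p / q * (Mq - 1)) := by field_simp; ring
    _ ≤ (1 + p / q * (Mq - 1)) ^ (q / p) :=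
      one_add_mul_self_le_rpow_one_add hs' ((one_le_div₀ hp0).2 hpq)
    _ ≤ Mp ^ (q / p) := by gcongr <;> linarith

theorem continuous_twoPointNorm {r : ℝ} (hr : 0 ≤ r) {u v : ℝ → ℝ} (hu : Continuous u)
    (hv : Continuous v) : Continuous fun d ↦ twoPointNorm r (u d) (v d) := by
  unfold twoPointNorm twoPointMoment
  exact ((continuous_const.mul ((continuous_rpow_const hr).comp hu)).add
    (continuous_const.mul ((continuous_rpow_const hr).comp hv))).rpow_const
    fun _ ↦ Or.inr (by positivity)

theorem TwoPointHypercontractive.of_le_two {p q ρ : ℝ} (hp : 1 ≤ p) (hpq : p ≤ q) (hq : q ≤ 2)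
    (hρ0 : 0 ≤ ρ) (hρ : ρ ≤ √((p - 1) / (q - 1))) : TwoPointHypercontractive p q ρ := by
  have hq0 : 0 < q := by linarith
  have hlt : Set.Ico (0 : ℝ) 1 ⊆
      {δ | twoPointNorm q (1 + ρ * δ) (1 - ρ * δ) ≤ twoPointNorm p (1 + δ) (1 - δ)} := by
    rintro δ ⟨hδ0, hδ1⟩
    have hρδ : ρ * δ ≤ 1 := mul_le_one₀ (hρ.trans (sqrt_div_sub_one_le_one hp hpq)) hδ0 hδ1.le
    have hMp : 0 ≤ twoPointMoment p (1 + δ) (1 - δ) :=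
      twoPointMoment_nonneg (by linarith) (by linarith)
    calc twoPointNorm q (1 + ρ * δ) (1 - ρ * δ)
        ≤ (twoPointMoment p (1 + δ) (1 - δ) ^ (q / p)) ^ (1 / q) :=
          rpow_le_rpow (twoPointMoment_nonneg (by nlinarith) (by linarith))
            (twoPointMoment_le_rpow hp hpq hq hρ0 hρ hδ0 hδ1) (by positivity)
      _ = twoPointNorm p (1 + δ) (1 - δ) := by
        rw [← rpow_mul hMp, twoPointNorm]; congr 1; field_simp
  intro δ hδ0 hδ1
  refine closure_minimal hlt (isClosed_le ?_ ?_)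
    (by rw [closure_Ico zero_ne_one]; exact ⟨hδ0, hδ1⟩)
  all_goals exact continuous_twoPointNorm (by linarith) (by fun_prop) (by fun_prop)

theorem inner_le_twoPointNorm_mul {P P' : ℝ} (h : P.HolderConjugate P') {u₁ u₂ v₁ v₂ : ℝ}
    (hu₁ : 0 ≤ u₁) (hu₂ : 0 ≤ u₂) (hv₁ : 0 ≤ v₁) (hv₂ : 0 ≤ v₂) :
    1 / 2 * (u₁ * v₁) + 1 / 2 * (u₂ * v₂) ≤ twoPointNorm P u₁ u₂ * twoPointNorm P' v₁ v₂ := by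
  have holder := inner_le_Lp_mul_Lq_of_nonneg univ h (f := ![u₁, u₂]) (g := ![v₁, v₂])
    (by simp [Fin.forall_fin_two, hu₁, hu₂]) (by simp [Fin.forall_fin_two, hv₁, hv₂])
  simp only [Fin.sum_univ_two, Matrix.cons_val_zero, Matrix.cons_val_one] at holder
  have half : (1 / 2 : ℝ) = (1 / 2) ^ (1 / P) * (1 / 2) ^ (1 / P') := by
    rw [← rpow_add (by norm_num), h.one_div_add_one_div, div_one, rpow_one]
  calc 1 / 2 * (u₁ * v₁) + 1 / 2 * (u₂ * v₂) = 1 / 2 * (u₁ * v₁ + u₂ * v₂) := by ring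
    _ ≤ 1 / 2 * ((u₁ ^ P + u₂ ^ P) ^ (1 / P) * (v₁ ^ P' + v₂ ^ P') ^ (1 / P')) := by gcongr
    _ = _ := by
      rw [half, twoPointNorm, twoPointNorm, twoPointMoment, twoPointMoment, ← mul_add, ← mul_add,
        mul_rpow (by norm_num) (by positivity), mul_rpow (by norm_num) (by positivity)]
      ring

theorem twoPointNorm_mul_left {r a u v : ℝ} (hr : r ≠ 0) (ha : 0 ≤ a) (hu : 0 ≤ u) (hv : 0 ≤ v) :
    twoPointNorm r (a * u) (a * v) = a * twoPointNorm r u v := by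
  have : twoPointMoment r (a * u) (a * v) = a ^ r * twoPointMoment r u v := by
    rw [twoPointMoment, twoPointMoment, mul_rpow ha hu, mul_rpow ha hv]; ring
  rw [twoPointNorm, this, mul_rpow (rpow_nonneg ha r) (twoPointMoment_nonneg hu hv), ← rpow_mul ha,
    mul_one_div_cancel hr, rpow_one, twoPointNorm]

theorem twoPointNorm_rpow_sub_one {Q Q' u v : ℝ} (h : Q.HolderConjugate Q') (hu : 0 ≤ u)
    (hv : 0 ≤ v) :
    twoPointNorm Q' (u ^ (Q - 1)) (v ^ (Q - 1)) = twoPointMoment Q u v ^ (1 / Q') := by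
  rw [twoPointNorm, twoPointMoment, twoPointMoment, ← rpow_mul hu, ← rpow_mul hv,
    h.sub_one_mul_conj]

theorem twoPointMoment_eq_mul_rpow_sub_one {Q u v : ℝ} (hQ : Q ≠ 0) (hu : 0 ≤ u) (hv : 0 ≤ v) :
    twoPointMoment Q u v = 1 / 2 * (u * u ^ (Q - 1)) + 1 / 2 * (v * v ^ (Q - 1)) := by
  rw [twoPointMoment, ← rpow_one_add' hu (by simpa), ← rpow_one_add' hv (by simpa),
    add_sub_cancel]

theorem exists_eq_mul_one_add_and_eq_mul_one_sub {u v : ℝ} (hu : 0 < u) (hv : 0 ≤ v) (hvu : v ≤ u) :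
    ∃ a t : ℝ, 0 < a ∧ 0 ≤ t ∧ t ≤ 1 ∧ u = a * (1 + t) ∧ v = a * (1 - t) :=
  ⟨(u + v) / 2, (u - v) / (u + v), by positivity, div_nonneg (by linarith) (by linarith),
    div_le_one_of_le₀ (by linarith) (by linarith), by field_simp; ring, by field_simp; ring⟩

theorem TwoPointHypercontractive.of_holderConjugate {P P' Q Q' ρ : ℝ} (hP : P.HolderConjugate P')
    (hQ : Q.HolderConjugate Q') (hρ0 : 0 ≤ ρ) (hρ1 : ρ ≤ 1)
    (h : TwoPointHypercontractive Q' P' ρ) : TwoPointHypercontractive P Q ρ := by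
  intro δ hδ0 hδ1
  have hx0 : 0 ≤ ρ * δ := mul_nonneg hρ0 hδ0
  have hx1 : ρ * δ ≤ 1 := mul_le_one₀ hρ1 hδ0 hδ1
  -- `g = (T_ρ f) ^ (Q - 1) = a (1 ± t)` is the function on which Hölder's inequality for
  -- `‖T_ρ f‖_Q` is an equality, and `⟪T_ρ f, g⟫ = ⟪f, T_ρ g⟫`.
  obtain ⟨a, t, ha, ht0, ht1, hg₁, hg₂⟩ := exists_eq_mul_one_add_and_eq_mul_one_sub
    (rpow_pos_of_pos (by linarith : 0 < 1 + ρ * δ) (Q - 1))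
    (rpow_nonneg (by linarith : 0 ≤ 1 - ρ * δ) (Q - 1))
    (rpow_le_rpow (by linarith) (by linarith) hQ.sub_one_pos.le)
  have hρt0 : 0 ≤ ρ * t := mul_nonneg hρ0 ht0
  have hρt1 : ρ * t ≤ 1 := mul_le_one₀ hρ1 ht0 ht1
  set W := twoPointMoment Q (1 + ρ * δ) (1 - ρ * δ)
  have hW : 0 < W := by
    unfold W twoPointMoment
    have := rpow_nonneg (by linarith : 0 ≤ 1 - ρ * δ) Q
    have := rpow_pos_of_pos (by linarith : 0 < 1 + ρ * δ) Q
    positivity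
  have key : W ≤ twoPointNorm P (1 + δ) (1 - δ) * W ^ (1 / Q') := calc
    W = 1 / 2 * ((1 + ρ * δ) * (1 + ρ * δ) ^ (Q - 1))
          + 1 / 2 * ((1 - ρ * δ) * (1 - ρ * δ) ^ (Q - 1)) :=
        twoPointMoment_eq_mul_rpow_sub_one hQ.ne_zero (by linarith) (by linarith)
    _ = 1 / 2 * ((1 + δ) * (a * (1 + ρ * t))) + 1 / 2 * ((1 - δ) * (a * (1 - ρ * t))) := by
        rw [hg₁, hg₂]; ring
    _ ≤ twoPointNorm P (1 + δ) (1 - δ) * twoPointNorm P' (a * (1 + ρ * t)) (a * (1 - ρ * t)) :=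
        inner_le_twoPointNorm_mul hP (by linarith) (by linarith) (mul_nonneg ha.le (by linarith))
          (mul_nonneg ha.le (by linarith))
    _ = twoPointNorm P (1 + δ) (1 - δ) * (a * twoPointNorm P' (1 + ρ * t) (1 - ρ * t)) := by
        rw [twoPointNorm_mul_left hP.symm.ne_zero ha.le (by linarith) (by linarith)]
    _ ≤ twoPointNorm P (1 + δ) (1 - δ) * (a * twoPointNorm Q' (1 + t) (1 - t)) := by
        gcongr
        · exact twoPointNorm_nonneg (by linarith) (by linarith)
        · exact h t ht0 ht1
    _ = twoPointNorm P (1 + δ) (1 - δ) * W ^ (1 / Q') := by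
        rw [← twoPointNorm_mul_left hQ.symm.ne_zero ha.le (by linarith) (by linarith), ← hg₁, ← hg₂,
          twoPointNorm_rpow_sub_one hQ (by linarith) (by linarith)]
  have hsplit : W ^ (1 / Q) * W ^ (1 / Q') = W := by
    rw [← rpow_add hW, hQ.one_div_add_one_div, div_one, rpow_one]
  refine le_of_mul_le_mul_right ?_ (rpow_pos_of_pos hW (1 / Q'))
  change W ^ (1 / Q) * W ^ (1 / Q') ≤ _
  rwa [hsplit]

theorem TwoPointHypercontractive.of_two_le {p q ρ : ℝ} (hp : 2 ≤ p) (hpq : p ≤ q) (hρ0 : 0 ≤ ρ)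
    (hρ : ρ ≤ √((p - 1) / (q - 1))) : TwoPointHypercontractive p q ρ := by
  have hp1 : 0 < p - 1 := by linarith
  have hq1 : 0 < q - 1 := by linarith
  refine .of_holderConjugate (.conjExponent (by linarith)) (.conjExponent (by linarith)) hρ0
    (hρ.trans (sqrt_div_sub_one_le_one (by linarith) hpq)) (.of_le_two ?_ ?_ ?_ hρ0 ?_)
  all_goals unfold conjExponent
  · rw [one_le_div₀ hq1]; linarith
  · rw [div_le_div_iff₀ hq1 hp1]; nlinarith
  · rw [div_le_iff₀ hp1]; linarith
  · convert hρ using 2; field_simp; ring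

theorem TwoPointHypercontractive.trans {p r q ρ₁ ρ₂ : ℝ} (h₁ : TwoPointHypercontractive p r ρ₁)
    (h₂ : TwoPointHypercontractive r q ρ₂) (hρ₁0 : 0 ≤ ρ₁) (hρ₁1 : ρ₁ ≤ 1) :
    TwoPointHypercontractive p q (ρ₁ * ρ₂) := by
  intro δ hδ0 hδ1
  rw [mul_comm ρ₁, mul_assoc]
  exact (h₂ _ (mul_nonneg hρ₁0 hδ0) (mul_le_one₀ hρ₁1 hδ0 hδ1)).trans (h₁ δ hδ0 hδ1)

theorem two_point_hypercontractivity (p q ρ δ : ℝ)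
    (hp : 1 ≤ p) (hpq : p ≤ q) (hρ0 : 0 ≤ ρ) (hρ : ρ ≤ Real.sqrt ((p - 1) / (q - 1)))
    (hδ0 : 0 ≤ δ) (hδ1 : δ ≤ 1) :
    ((1 / 2) * (1 + ρ * δ) ^ q + (1 / 2) * (1 - ρ * δ) ^ q) ^ (1 / q)
      ≤ ((1 / 2) * (1 + δ) ^ p + (1 / 2) * (1 - δ) ^ p) ^ (1 / p) := by
  suffices h : TwoPointHypercontractive p q ρ from h δ hδ0 hδ1
  rcases le_total q 2 with hq2 | hq2
  · exact .of_le_two hp hpq hq2 hρ0 hρ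
  rcases le_total 2 p with hp2 | hp2
  · exact .of_two_le hp2 hpq hρ0 hρ
  -- factor through `L²`: `ρ = (ρ / ρ₂) * ρ₂` with `ρ₂` the critical noise from `L²` to `L^q`
  set ρ₂ := √((2 - 1) / (q - 1))
  have hρ₂ : 0 < ρ₂ := sqrt_pos.2 (div_pos (by norm_num) (by linarith))
  have hρ₁ : ρ / ρ₂ ≤ √((p - 1) / (2 - 1)) := by
    rw [div_le_iff₀ hρ₂, ← sqrt_mul (by norm_num; linarith)]
    rwa [show (p - 1) / (2 - 1) * ((2 - 1) / (q - 1)) = (p - 1) / (q - 1) by ring]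
  have h := (TwoPointHypercontractive.of_le_two hp hp2 le_rfl (div_nonneg hρ0 hρ₂.le) hρ₁).trans
    (.of_two_le le_rfl hq2 hρ₂.le le_rfl) (div_nonneg hρ0 hρ₂.le)
    (hρ₁.trans (sqrt_div_sub_one_le_one hp hp2))
  rwa [div_mul_cancel₀ ρ hρ₂.ne'] at h
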